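/- arXiv:math/0210006 — 4 statements merged into one kernel-verified Lean document; each statement's English description precedes it below -/
import Mathlib

section
/- The face operators on block sequences of the second kind (with a half-open first block) satisfy the cubical identities: for every such block sequence B of dimension q, all ε, ε′ ∈ {0,1} and all 1 ≤ i ≤ j ≤ q−1, one has d_j^ε(d_i^{ε′}(B)) = d_i^{ε′}(d_{j+1}^ε(B)). -/
/-!
Block sequences of the second kind (with a half-open first block), encoding
faces of the standard cube in the combinatorics of the cubical path functor.

A block sequence of the second kind is represented as a list of blocks, each
block a list of natural numbers: the entries are strictly increasing, the last
entry is `n+1`, consecutive blocks overlap in exactly one entry, every block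
other than the first has at least two entries, while the first block may be a
singleton.  The free entries are: in the first block, all entries except the
last; in the other blocks, the interior entries.
-/

/-- `L` is a block sequence of the second kind for the `n`-cube combinatorics. -/
structure IsBlockSeq2 (n : ℕ) (L : List (List ℕ)) : Prop where
  ne : L ≠ []
  first_ne : ∀ b ∈ L.head?, b ≠ []
  two_le_length : ∀ b ∈ L.tail, 2 ≤ b.length
  sorted : ∀ b ∈ L, b.Pairwise (· < ·)
  chain : L.Chain' fun b b' => b.getLast? = b'.head?
  last_eq : L.getLast?.bind List.getLast? = some (n + 1)

/-- Dimension of a block sequence of the second kind: the first block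
contributes all of its entries except the last one, every other block
contributes its interior entries. -/
def blockDim2 (L : List (List ℕ)) : ℕ :=
  match L with
  | [] => 0
  | b :: rest => (b.length - 1) + (rest.map fun b' => b'.length - 2).sum

/-- Deletion face operator (1-based) on ordinary blocks (free = interior entries). -/
def delFree : ℕ → List (List ℕ) → List (List ℕ)
  | _, [] => []
  | i, b :: rest =>
      if i ≤ b.length - 2 then (b.eraseIdx i) :: rest
      else b :: delFree (i - (b.length - 2)) rest

/-- Splitting face operator (1-based) on ordinary blocks (free = interior entries). -/
def splitFree : ℕ → List (List ℕ) → List (List ℕ)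
  | _, [] => []
  | i, b :: rest =>
      if i ≤ b.length - 2 then (b.take (i + 1)) :: (b.drop i) :: rest
      else b :: splitFree (i - (b.length - 2)) rest

/-- The face operator `d_i¹` of the second kind (1-based index `i`): delete the
`i`-th free entry, where in the first (half-open) block every entry except the
last is free. -/
def delFree2 (i : ℕ) (L : List (List ℕ)) : List (List ℕ) :=
  match L with
  | [] => []
  | b :: rest =>
      if i ≤ b.length - 1 then (b.eraseIdx (i - 1)) :: rest
      else b :: delFree (i - (b.length - 1)) rest

/-- The face operator `d_i⁰` of the second kind (1-based index `i`): split the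
block containing the `i`-th free entry at that entry; if that entry lies in the
first (half-open) block, the first of the two new blocks becomes the new first
block, again of half-open type. -/
def splitFree2 (i : ℕ) (L : List (List ℕ)) : List (List ℕ) :=
  match L with
  | [] => []
  | b :: rest =>
      if i ≤ b.length - 1 then (b.take i) :: (b.drop (i - 1)) :: rest
      else b :: splitFree (i - (b.length - 1)) rest

/-- The face operator `d_i^ε` of the second kind; `ε = false` is `d_i⁰` (split),
`ε = true` is `d_i¹` (delete).  The index `i` is 1-based. -/
def dFace2 (ε : Bool) (i : ℕ) (L : List (List ℕ)) : List (List ℕ) :=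
  if ε then delFree2 i L else splitFree2 i L

namespace CubeAux

theorem er_er : ∀ (l : List ℕ) (i j : ℕ), i ≤ j →
    (l.eraseIdx i).eraseIdx j = (l.eraseIdx (j+1)).eraseIdx i := by
  intro l
  induction l with
  | nil => intros; simp
  | cons a t IH =>
    intro i j hij
    cases i with
    | zero => simp
    | succ i' =>
      cases j with
      | zero => omega
      | succ j' => simp only [List.eraseIdx_cons_succ]; rw [IH i' j' (by omega)]

theorem take_er : ∀ (l : List ℕ) (k m : ℕ), k ≤ m →
    (l.eraseIdx m).take k = l.take k := by
  intro l
  induction l with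
  | nil => intros; simp
  | cons a t IH =>
    intro k m hkm
    cases k with
    | zero => simp
    | succ k' =>
      cases m with
      | zero => omega
      | succ m' =>
        simp only [List.eraseIdx_cons_succ, List.take_succ_cons]
        rw [IH k' m' (by omega)]

theorem drop_er : ∀ (l : List ℕ) (k m : ℕ), k ≤ m →
    (l.eraseIdx m).drop k = (l.drop k).eraseIdx (m - k) := by
  intro l
  induction l with
  | nil => intros; simp
  | cons a t IH =>
    intro k m hkm
    cases k with
    | zero => simp
    | succ k' =>
      cases m with
      | zero => omega
      | succ m' =>
        simp only [List.eraseIdx_cons_succ, List.drop_succ_cons, Nat.succ_sub_succ]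
        exact IH k' m' (by omega)

theorem er_take : ∀ (l : List ℕ) (k i : ℕ), i ≤ k →
    (l.take (k+1)).eraseIdx i = (l.eraseIdx i).take k := by
  intro l
  induction l with
  | nil => intros; simp
  | cons a t IH =>
    intro k i hik
    cases i with
    | zero => simp
    | succ i' =>
      cases k with
      | zero => omega
      | succ k' =>
        simp only [List.take_succ_cons, List.eraseIdx_cons_succ]
        rw [IH k' i' (by omega)]

theorem drop_er_of_le : ∀ (l : List ℕ) (i j : ℕ), i ≤ j → i < l.length →
    (l.eraseIdx i).drop j = l.drop (j+1) := by
  intro l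
  induction l with
  | nil => intros; simp_all
  | cons a t IH =>
    intro i j hij hil
    cases i with
    | zero => simp [List.drop_succ_cons]
    | succ i' =>
      cases j with
      | zero => omega
      | succ j' =>
        simp only [List.eraseIdx_cons_succ, List.drop_succ_cons]
        exact IH i' j' (by omega) (by simpa using Nat.lt_of_succ_lt_succ hil)

theorem delDel (L : List (List ℕ)) : ∀ i j : ℕ, 1 ≤ i → i ≤ j →
    delFree j (delFree i L) = delFree i (delFree (j+1) L) := by
  induction L with
  | nil => intros; rfl
  | cons b rest IH =>
    intro i j hi hij
    simp only [delFree]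
    by_cases hib : i ≤ b.length - 2
    · have hb : 3 ≤ b.length := by omega
      have hE : (b.eraseIdx i).length = b.length - 1 := by
        rw [List.length_eraseIdx, if_pos (by omega)]
      rw [if_pos hib]
      by_cases hjb : j + 1 ≤ b.length - 2
      · have hE' : (b.eraseIdx (j+1)).length = b.length - 1 := by
          rw [List.length_eraseIdx, if_pos (by omega)]
        rw [if_pos hjb]
        simp only [delFree]
        rw [hE, hE', if_pos (by omega : j ≤ b.length - 1 - 2),
          if_pos (by omega : i ≤ b.length - 1 - 2), er_er b i j hij]
      · rw [if_neg hjb]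
        simp only [delFree]
        rw [hE, if_neg (by omega : ¬ j ≤ b.length - 1 - 2), if_pos hib,
          (by omega : j - (b.length - 1 - 2) = j + 1 - (b.length - 2))]
    · have hf : b.length - 2 < i := by omega
      rw [if_neg hib, if_neg (by omega : ¬ j + 1 ≤ b.length - 2)]
      simp only [delFree]
      rw [if_neg (by omega : ¬ j ≤ b.length - 2), if_neg hib,
        (by omega : j + 1 - (b.length - 2) = (j - (b.length - 2)) + 1),
        IH (i - (b.length - 2)) (j - (b.length - 2)) (by omega) (by omega)]

theorem splitSplit (L : List (List ℕ)) : ∀ i j : ℕ, 1 ≤ i → i ≤ j →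
    splitFree j (splitFree i L) = splitFree i (splitFree (j+1) L) := by
  induction L with
  | nil => intros; rfl
  | cons b rest IH =>
    intro i j hi hij
    simp only [splitFree]
    by_cases hib : i ≤ b.length - 2
    · have hb : 3 ≤ b.length := by omega
      have hT : (b.take (i+1)).length = i + 1 := by rw [List.length_take]; omega
      have hD : (b.drop i).length = b.length - i := by rw [List.length_drop]
      rw [if_pos hib]
      by_cases hjb : j + 1 ≤ b.length - 2
      · have hT' : (b.take (j+2)).length = j + 2 := by rw [List.length_take]; omega
        rw [if_pos hjb]
        simp only [splitFree]
        rw [hT, hT', if_neg (by omega : ¬ j ≤ i + 1 - 2),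
          if_pos (by omega : i ≤ j + 2 - 2)]
        rw [hD, if_pos (by omega : j - (i + 1 - 2) ≤ b.length - i - 2)]
        have e1 : (b.take (j+2)).take (i+1) = b.take (i+1) := by
          rw [List.take_take]; congr 1; omega
        have e2 : (b.take (j+2)).drop i = (b.drop i).take (j - (i + 1 - 2) + 1) := by
          rw [List.drop_take]; congr 1; omega
        have e3 : (b.drop i).drop (j - (i + 1 - 2)) = b.drop (j+1) := by
          rw [List.drop_drop]; congr 1; omega
        rw [e1, e2, e3]
      · rw [if_neg hjb]
        simp only [splitFree]
        rw [hT, if_neg (by omega : ¬ j ≤ i + 1 - 2), if_pos hib]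
        rw [hD, if_neg (by omega : ¬ j - (i + 1 - 2) ≤ b.length - i - 2),
          (by omega : j - (i + 1 - 2) - (b.length - i - 2) = j + 1 - (b.length - 2))]
    · have hf : b.length - 2 < i := by omega
      rw [if_neg hib, if_neg (by omega : ¬ j + 1 ≤ b.length - 2)]
      simp only [splitFree]
      rw [if_neg (by omega : ¬ j ≤ b.length - 2), if_neg hib,
        (by omega : j + 1 - (b.length - 2) = (j - (b.length - 2)) + 1),
        IH (i - (b.length - 2)) (j - (b.length - 2)) (by omega) (by omega)]

theorem delSplit (L : List (List ℕ)) : ∀ i j : ℕ, 1 ≤ i → i ≤ j →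
    delFree j (splitFree i L) = splitFree i (delFree (j+1) L) := by
  induction L with
  | nil => intros; rfl
  | cons b rest IH =>
    intro i j hi hij
    simp only [splitFree, delFree]
    by_cases hib : i ≤ b.length - 2
    · have hb : 3 ≤ b.length := by omega
      have hT : (b.take (i+1)).length = i + 1 := by rw [List.length_take]; omega
      have hD : (b.drop i).length = b.length - i := by rw [List.length_drop]
      rw [if_pos hib]
      by_cases hjb : j + 1 ≤ b.length - 2
      · have hE' : (b.eraseIdx (j+1)).length = b.length - 1 := by
          rw [List.length_eraseIdx, if_pos (by omega)]
        rw [if_pos hjb]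
        simp only [delFree, splitFree]
        rw [hT, hE', if_neg (by omega : ¬ j ≤ i + 1 - 2),
          if_pos (by omega : i ≤ b.length - 1 - 2)]
        rw [hD, if_pos (by omega : j - (i + 1 - 2) ≤ b.length - i - 2)]
        have e1 : (b.eraseIdx (j+1)).take (i+1) = b.take (i+1) :=
          take_er b (i+1) (j+1) (by omega)
        have e2 : (b.eraseIdx (j+1)).drop i = (b.drop i).eraseIdx (j - (i + 1 - 2)) := by
          rw [drop_er b i (j+1) (by omega)]; congr 1; omega
        rw [e1, e2]
      · rw [if_neg hjb]
        simp only [delFree, splitFree]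
        rw [hT, if_neg (by omega : ¬ j ≤ i + 1 - 2), if_pos hib]
        rw [hD, if_neg (by omega : ¬ j - (i + 1 - 2) ≤ b.length - i - 2),
          (by omega : j - (i + 1 - 2) - (b.length - i - 2) = j + 1 - (b.length - 2))]
    · have hf : b.length - 2 < i := by omega
      rw [if_neg hib, if_neg (by omega : ¬ j + 1 ≤ b.length - 2)]
      simp only [delFree, splitFree]
      rw [if_neg (by omega : ¬ j ≤ b.length - 2), if_neg hib,
        (by omega : j + 1 - (b.length - 2) = (j - (b.length - 2)) + 1),
        IH (i - (b.length - 2)) (j - (b.length - 2)) (by omega) (by omega)]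

theorem splitDel (L : List (List ℕ)) : ∀ i j : ℕ, 1 ≤ i → i ≤ j →
    splitFree j (delFree i L) = delFree i (splitFree (j+1) L) := by
  induction L with
  | nil => intros; rfl
  | cons b rest IH =>
    intro i j hi hij
    simp only [splitFree, delFree]
    by_cases hib : i ≤ b.length - 2
    · have hb : 3 ≤ b.length := by omega
      have hE : (b.eraseIdx i).length = b.length - 1 := by
        rw [List.length_eraseIdx, if_pos (by omega)]
      rw [if_pos hib]
      by_cases hjb : j + 1 ≤ b.length - 2
      · have hT' : (b.take (j+2)).length = j + 2 := by rw [List.length_take]; omega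
        rw [if_pos hjb]
        simp only [delFree, splitFree]
        rw [hE, hT', if_pos (by omega : j ≤ b.length - 1 - 2),
          if_pos (by omega : i ≤ j + 2 - 2)]
        have e1 : (b.take (j+2)).eraseIdx i = (b.eraseIdx i).take (j+1) :=
          er_take b (j+1) i (by omega)
        have e2 : (b.eraseIdx i).drop j = b.drop (j+1) :=
          drop_er_of_le b i j hij (by omega)
        rw [e1, e2]
      · rw [if_neg hjb]
        simp only [delFree, splitFree]
        rw [hE, if_neg (by omega : ¬ j ≤ b.length - 1 - 2), if_pos hib,
          (by omega : j - (b.length - 1 - 2) = j + 1 - (b.length - 2))]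
    · have hf : b.length - 2 < i := by omega
      rw [if_neg hib, if_neg (by omega : ¬ j + 1 ≤ b.length - 2)]
      simp only [delFree, splitFree]
      rw [if_neg (by omega : ¬ j ≤ b.length - 2), if_neg hib,
        (by omega : j + 1 - (b.length - 2) = (j - (b.length - 2)) + 1),
        IH (i - (b.length - 2)) (j - (b.length - 2)) (by omega) (by omega)]

/-- Ordinary (interior-free) face operator. -/
def fOrd (ε : Bool) (i : ℕ) (L : List (List ℕ)) : List (List ℕ) :=
  if ε then delFree i L else splitFree i L

theorem fOrdComm (ε ε' : Bool) (L : List (List ℕ)) (i j : ℕ) (hi : 1 ≤ i) (hij : i ≤ j) :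
    fOrd ε j (fOrd ε' i L) = fOrd ε' i (fOrd ε (j+1) L) := by
  cases ε <;> cases ε' <;> simp only [fOrd, if_true, if_false, Bool.false_eq_true, Bool.true_eq_false]
  · exact splitSplit L i j hi hij
  · exact splitDel L i j hi hij
  · exact delSplit L i j hi hij
  · exact delDel L i j hi hij

theorem dFace2_ne_nil (ε : Bool) (i : ℕ) (b : List ℕ) (rest : List (List ℕ)) :
    dFace2 ε i (b :: rest) ≠ [] := by
  cases ε <;> simp only [dFace2, delFree2, splitFree2, if_true, if_false,
    Bool.false_eq_true] <;> split <;> simp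

theorem pad (ε : Bool) (k x : ℕ) (b : List ℕ) (rest : List (List ℕ))
    (c : List ℕ) (R : List (List ℕ)) (h : dFace2 ε (k+1) (b :: rest) = c :: R) :
    fOrd ε (k+1) ((x :: b) :: rest) = (x :: c) :: R := by
  have hlen : (x :: b).length - 2 = b.length - 1 := by simp
  cases ε
  · -- split
    simp only [dFace2, Bool.false_eq_true, if_false] at h
    simp only [fOrd, Bool.false_eq_true, if_false, splitFree, hlen]
    simp only [splitFree2, Nat.add_sub_cancel] at h
    by_cases hc : k + 1 ≤ b.length - 1
    · rw [if_pos hc] at h ⊢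
      rw [List.take_succ_cons, List.drop_succ_cons]
      injection h with h1 h2; subst h1; subst h2; rfl
    · rw [if_neg hc] at h ⊢
      injection h with h1 h2; subst h1; subst h2; rfl
  · -- delete
    simp only [dFace2, if_true] at h
    simp only [fOrd, if_true, delFree, hlen]
    simp only [delFree2, Nat.add_sub_cancel] at h
    by_cases hc : k + 1 ≤ b.length - 1
    · rw [if_pos hc] at h ⊢
      rw [List.eraseIdx_cons_succ]
      injection h with h1 h2; subst h1; subst h2; rfl
    · rw [if_neg hc] at h ⊢
      injection h with h1 h2; subst h1; subst h2; rfl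

end CubeAux

/-- The face operators on block sequences of the second kind
(with a half-open first block) satisfy the cubical identities: for every such
block sequence `B` of dimension `q`, all `ε, ε' ∈ {0,1}` and all
`1 ≤ i ≤ j ≤ q - 1`, one has `d_j^ε (d_i^{ε'} B) = d_i^{ε'} (d_{j+1}^ε B)`. -/
theorem faceOps2_cubical_identities (n : ℕ) (L : List (List ℕ)) (hL : IsBlockSeq2 n L)
    (q : ℕ) (hq : q = blockDim2 L) (ε ε' : Bool) (i j : ℕ)
    (hi : 1 ≤ i) (hij : i ≤ j) (hj : j ≤ q - 1) :
    dFace2 ε j (dFace2 ε' i L) = dFace2 ε' i (dFace2 ε (j + 1) L) := by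
  cases L with
  | nil => cases ε <;> cases ε' <;> rfl
  | cons b rest =>
    obtain ⟨i', rfl⟩ : ∃ i', i = i' + 1 := ⟨i - 1, by omega⟩
    obtain ⟨j', rfl⟩ : ∃ j', j = j' + 1 := ⟨j - 1, by omega⟩
    obtain ⟨c, R, hc⟩ : ∃ c R, dFace2 ε' (i' + 1) (b :: rest) = c :: R := by
      rcases e : dFace2 ε' (i' + 1) (b :: rest) with _ | ⟨c, R⟩
      · exact absurd e (CubeAux.dFace2_ne_nil _ _ _ _)
      · exact ⟨c, R, rfl⟩
    obtain ⟨c2, R2, hc2⟩ : ∃ c R, dFace2 ε (j' + 1 + 1) (b :: rest) = c :: R := by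
      rcases e : dFace2 ε (j' + 1 + 1) (b :: rest) with _ | ⟨c, R⟩
      · exact absurd e (CubeAux.dFace2_ne_nil _ _ _ _)
      · exact ⟨c, R, rfl⟩
    obtain ⟨d, S, hd⟩ : ∃ d S, dFace2 ε (j' + 1) (c :: R) = d :: S := by
      rcases e : dFace2 ε (j' + 1) (c :: R) with _ | ⟨d, S⟩
      · exact absurd e (CubeAux.dFace2_ne_nil _ _ _ _)
      · exact ⟨d, S, rfl⟩
    obtain ⟨d2, S2, hd2⟩ : ∃ d S, dFace2 ε' (i' + 1) (c2 :: R2) = d :: S := by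
      rcases e : dFace2 ε' (i' + 1) (c2 :: R2) with _ | ⟨d, S⟩
      · exact absurd e (CubeAux.dFace2_ne_nil _ _ _ _)
      · exact ⟨d, S, rfl⟩
    have comm := CubeAux.fOrdComm ε ε' ((0 :: b) :: rest) (i' + 1) (j' + 1)
      (by omega) (by omega)
    rw [CubeAux.pad ε' i' 0 b rest c R hc, CubeAux.pad ε (j' + 1) 0 b rest c2 R2 hc2,
      CubeAux.pad ε j' 0 c R d S hd, CubeAux.pad ε' i' 0 c2 R2 d2 S2 hd2] at comm
    rw [hc, hc2, hd, hd2]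
    injection comm with h1 h2
    injection h1 with _ h1'
    rw [h1', h2]
end

section
/- The Serre diagonal on the cellular chain complex of the standard n-cube is a chain map: Δ∘∂ = (∂⊗id + id⊗∂)∘Δ, where on homogeneous elements (id⊗∂)(x⊗y) = (−1)^{dim x} x ⊗ ∂y (Koszul sign convention). -/
/-!
The cellular chain complex of the standard `n`-cube.

A face of the `n`-cube is encoded as a function `c : Fin n → Option Bool`,
with `some false` = the value `0`, `some true` = the value `1` and `none` = `∗`
(a free coordinate).  `Q n` is the free `ℤ`-module on the set of all faces
(the direct sum of all the graded pieces `Q_k`).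
-/

open TensorProduct

/-- A face of the standard `n`-cube: value `some false` is `0`, `some true`
is `1`, `none` is `∗` (a free coordinate). -/
abbrev CubeFace (n : ℕ) : Type := Fin n → Option Bool

/-- The set of free coordinates of a face. -/
def freeSet {n : ℕ} (c : CubeFace n) : Finset (Fin n) :=
  Finset.univ.filter fun i => c i = none

/-- The dimension of a face: the number of its free coordinates. -/
def faceDim {n : ℕ} (c : CubeFace n) : ℕ := (freeSet c).card

/-- The free `ℤ`-module on the faces of the `n`-cube (the total cellular
chain module `⊕ₖ Q_k`). -/
abbrev Q (n : ℕ) : Type := CubeFace n →₀ ℤ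

/-- The sign exponent `p(c,i) = #{j < i : c j = ∗}`. -/
def pExp {n : ℕ} (c : CubeFace n) (i : Fin n) : ℕ :=
  ((freeSet c).filter fun j => j < i).card

/-- Reassign the value `b` to all coordinates of `c` lying in `S`. -/
def setTo {n : ℕ} (c : CubeFace n) (S : Finset (Fin n)) (b : Bool) : CubeFace n :=
  fun i => if i ∈ S then some b else c i

/-- The shuffle sign exponent `s(I,J) = #{(i,j) ∈ I × J : j < i}`. -/
def shufExp {n : ℕ} (I J : Finset (Fin n)) : ℕ :=
  ((I ×ˢ J).filter fun p => p.2 < p.1).card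

/-- The cellular boundary operator
`∂c = Σ_{i : c i = ∗} (−1)^{p(c,i)} (c[i↦1] − c[i↦0])`. -/
noncomputable def bdry (n : ℕ) : Q n →ₗ[ℤ] Q n :=
  (Finsupp.lift (Q n) ℤ (CubeFace n)) fun c =>
    ∑ i ∈ freeSet c, ((-1 : ℤ) ^ pExp c i) •
      (Finsupp.single (Function.update c i (some true)) (1 : ℤ)
        - Finsupp.single (Function.update c i (some false)) (1 : ℤ))

/-- The Serre diagonal
`Δc = Σ_{I ⊔ J = free(c)} (−1)^{s(I,J)} c[J↦0] ⊗ c[I↦1]`. -/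
noncomputable def serreDiag (n : ℕ) : Q n →ₗ[ℤ] Q n ⊗[ℤ] Q n :=
  (Finsupp.lift (Q n ⊗[ℤ] Q n) ℤ (CubeFace n)) fun c =>
    ∑ I ∈ (freeSet c).powerset,
      ((-1 : ℤ) ^ shufExp I (freeSet c \ I)) •
        (Finsupp.single (setTo c (freeSet c \ I) false) (1 : ℤ) ⊗ₜ[ℤ]
          Finsupp.single (setTo c I true) (1 : ℤ))

/-- The Koszul sign operator `x ↦ (−1)^{dim x} x` (on basis elements). -/
noncomputable def koszul (n : ℕ) : Q n →ₗ[ℤ] Q n :=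
  (Finsupp.lift (Q n) ℤ (CubeFace n)) fun c =>
    ((-1 : ℤ) ^ faceDim c) • Finsupp.single c (1 : ℤ)


/-!
Write `∂ = ∂¹ - ∂⁰` with `∂^ε c = Σᵢ (-1)^{p(c,i)} c[i↦ε]`, and for a face `c` let `T(ε, δ)` be
the sum over splittings `free(c) = {i} ⊔ I ⊔ J` of
`(-1)^{p(c,i) + s(I,J)} c[J↦0][i↦ε] ⊗ c[I↦1][i↦δ]`. Reindexing shows that `Δ ∂^ε c`,
`(∂^ε ⊗ id) Δ c` and `(κ ⊗ ∂^ε) Δ c` are `T(ε, ε)`, `T(ε, 1)` and `T(0, ε)`: moving `i` into `I`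
or `J` changes `s` by the number of elements on one side of `i`, which is exactly what `p` (and
the Koszul sign) account for. So `Δ ∂ c = T(1,1) - T(0,0)`, while on the right-hand side the two
mixed sums `T(0,1)`, from `∂⁰ ⊗ id` and from `κ ⊗ ∂¹`, cancel.
-/

namespace Finset

variable {α M : Type*} [DecidableEq α] [AddCommMonoid M]

theorem sum_powerset_sum_mem (s : Finset α) (f : Finset α → α → M) :
    ∑ t ∈ s.powerset, ∑ a ∈ t, f t a = ∑ a ∈ s, ∑ t ∈ (s.erase a).powerset, f (insert a t) a := by
  rw [sum_sigma', sum_sigma']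
  symm
  refine sum_nbij' (fun p => ⟨insert p.1 p.2, p.1⟩) (fun p => ⟨p.2, p.1.erase p.2⟩)
    ?_ ?_ ?_ ?_ fun _ _ => rfl
  all_goals rintro ⟨x, y⟩ h
  all_goals simp only [mem_sigma, mem_powerset] at h ⊢
  · exact ⟨insert_subset h.1 (h.2.trans (erase_subset _ _)), mem_insert_self _ _⟩
  · exact ⟨h.1 h.2, erase_subset_erase _ h.1⟩
  · simp [erase_insert fun hx => notMem_erase x s (h.2 hx)]
  · simp [insert_erase h.2]

theorem sum_powerset_sum_sdiff (s : Finset α) (f : Finset α → α → M) :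
    ∑ t ∈ s.powerset, ∑ a ∈ s \ t, f t a = ∑ a ∈ s, ∑ t ∈ (s.erase a).powerset, f t a :=
  sum_comm' fun t a => by
    simp only [mem_powerset, mem_sdiff, subset_erase]
    tauto

theorem card_filter_lt_add_card_filter_gt {β : Type*} [LinearOrder β] {s : Finset β} {b : β}
    (hb : b ∉ s) : #(s.filter (· < b)) + #(s.filter (b < ·)) = #s := by
  conv_rhs => rw [← card_filter_add_card_filter_not (s := s) (· < b)]
  congr 2
  exact filter_congr fun a ha => by
    rw [not_lt, le_iff_lt_or_eq]
    exact ⟨Or.inl, fun h => h.resolve_right fun hab => hb (hab ▸ ha)⟩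

theorem card_filter_eq_add_card_filter_sdiff {s t : Finset α} (h : t ⊆ s) (p : α → Prop)
    [DecidablePred p] : #(s.filter p) = #(t.filter p) + #((s \ t).filter p) := by
  rw [← card_union_of_disjoint (disjoint_filter_filter disjoint_sdiff), ← filter_union,
    union_sdiff_of_subset h]

end Finset

section

open Finset

variable {n : ℕ}

theorem freeSet_update_some (c : CubeFace n) (i : Fin n) (b : Bool) :
    freeSet (Function.update c i (some b)) = (freeSet c).erase i := by
  ext j
  rcases eq_or_ne j i with rfl | h <;> simp [freeSet, *]

theorem freeSet_setTo (c : CubeFace n) (S : Finset (Fin n)) (b : Bool) :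
    freeSet (setTo c S b) = freeSet c \ S := by
  ext j
  simp only [freeSet, mem_filter, mem_univ, true_and, mem_sdiff]
  by_cases h : j ∈ S <;> simp [setTo, h]

theorem setTo_insert (c : CubeFace n) (S : Finset (Fin n)) (i : Fin n) (b : Bool) :
    setTo c (insert i S) b = Function.update (setTo c S b) i (some b) := by
  ext1 j
  rcases eq_or_ne j i with rfl | h <;> simp [setTo, *]

theorem setTo_update_of_notMem (c : CubeFace n) {S : Finset (Fin n)} {i : Fin n}
    (hi : i ∉ S) (v : Option Bool) (b : Bool) :
    setTo (Function.update c i v) S b = Function.update (setTo c S b) i v := by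
  ext1 j
  rcases eq_or_ne j i with rfl | h <;> simp [setTo, *]

theorem pExp_setTo (c : CubeFace n) (S : Finset (Fin n)) (b : Bool) (i : Fin n) :
    pExp (setTo c S b) i = #((freeSet c \ S).filter (· < i)) := by
  rw [pExp, freeSet_setTo]

theorem pExp_eq_add {c : CubeFace n} {i : Fin n} {I : Finset (Fin n)}
    (hI : I ⊆ (freeSet c).erase i) :
    pExp c i = #(I.filter (· < i)) + #(((freeSet c).erase i \ I).filter (· < i)) := by
  rw [← card_filter_eq_add_card_filter_sdiff hI, filter_erase,
    erase_eq_of_notMem (by simp), pExp]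

theorem shufExp_eq_sum_left (I J : Finset (Fin n)) :
    shufExp I J = ∑ i ∈ I, #(J.filter (· < i)) := by
  rw [shufExp, card_filter, sum_product]
  exact sum_congr rfl fun _ _ => (card_filter _ _).symm

theorem shufExp_eq_sum_right (I J : Finset (Fin n)) :
    shufExp I J = ∑ j ∈ J, #(I.filter (j < ·)) := by
  rw [shufExp, card_filter, sum_product_right]
  exact sum_congr rfl fun _ _ => (card_filter _ _).symm

theorem shufExp_insert_left {I : Finset (Fin n)} {i : Fin n} (hi : i ∉ I) (J : Finset (Fin n)) :
    shufExp (insert i I) J = shufExp I J + #(J.filter (· < i)) := by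
  rw [shufExp_eq_sum_left, shufExp_eq_sum_left, sum_insert hi, add_comm]

theorem shufExp_insert_right (I : Finset (Fin n)) {J : Finset (Fin n)} {j : Fin n} (hj : j ∉ J) :
    shufExp I (insert j J) = shufExp I J + #(I.filter (j < ·)) := by
  rw [shufExp_eq_sum_right, shufExp_eq_sum_right, sum_insert hj, add_comm]

noncomputable def bdryFace (n : ℕ) (ε : Bool) : Q n →ₗ[ℤ] Q n :=
  (Finsupp.lift (Q n) ℤ (CubeFace n)) fun c =>
    ∑ i ∈ freeSet c, ((-1 : ℤ) ^ pExp c i) • Finsupp.single (Function.update c i (some ε)) 1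

theorem bdryFace_single (ε : Bool) (c : CubeFace n) : bdryFace n ε (Finsupp.single c 1) =
    ∑ i ∈ freeSet c, ((-1 : ℤ) ^ pExp c i) • Finsupp.single (Function.update c i (some ε)) 1 := by
  simp [bdryFace]

theorem serreDiag_single (c : CubeFace n) : serreDiag n (Finsupp.single c 1) =
    ∑ I ∈ (freeSet c).powerset, ((-1 : ℤ) ^ shufExp I (freeSet c \ I)) •
      (Finsupp.single (setTo c (freeSet c \ I) false) 1 ⊗ₜ[ℤ]
        Finsupp.single (setTo c I true) 1) := by
  simp [serreDiag]

theorem koszul_single (c : CubeFace n) :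
    koszul n (Finsupp.single c 1) = ((-1 : ℤ) ^ faceDim c) • Finsupp.single c 1 := by
  rw [koszul, Finsupp.lift_apply, Finsupp.sum_single_index] <;> simp

theorem bdry_eq_sub (n : ℕ) : bdry n = bdryFace n true - bdryFace n false := by
  ext c : 2
  simp [bdry, bdryFace, smul_sub]

/-- `T(ε, δ)`, with `J = free(c) \ {i} \ I`. -/
noncomputable def markedSum (c : CubeFace n) (ε δ : Bool) : Q n ⊗[ℤ] Q n :=
  ∑ i ∈ freeSet c, ∑ I ∈ ((freeSet c).erase i).powerset,
    ((-1 : ℤ) ^ (pExp c i + shufExp I ((freeSet c).erase i \ I))) •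
      (Finsupp.single (Function.update (setTo c ((freeSet c).erase i \ I) false) i (some ε)) 1 ⊗ₜ[ℤ]
        Finsupp.single (Function.update (setTo c I true) i (some δ)) 1)

theorem serreDiag_bdryFace_single (ε : Bool) (c : CubeFace n) :
    serreDiag n (bdryFace n ε (Finsupp.single c 1)) = markedSum c ε ε := by
  rw [bdryFace_single, map_sum, markedSum]
  refine sum_congr rfl fun i _ => ?_
  rw [map_smul, serreDiag_single, freeSet_update_some, smul_sum]
  refine sum_congr rfl fun I hI => ?_
  have hiI : i ∉ I := fun h => notMem_erase i _ (mem_powerset.1 hI h)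
  rw [smul_smul, ← pow_add, setTo_update_of_notMem c hiI,
    setTo_update_of_notMem c (by simp : i ∉ (freeSet c).erase i \ I)]

theorem map_bdryFace_id_serreDiag_single (ε : Bool) (c : CubeFace n) :
    TensorProduct.map (bdryFace n ε) LinearMap.id (serreDiag n (Finsupp.single c 1)) =
      markedSum c ε true := by
  calc _ = ∑ I ∈ (freeSet c).powerset, ∑ i ∈ I,
        ((-1 : ℤ) ^ (shufExp I (freeSet c \ I) + #(I.filter (· < i)))) •
          (Finsupp.single (Function.update (setTo c (freeSet c \ I) false) i (some ε)) (1 : ℤ) ⊗ₜ[ℤ]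
            Finsupp.single (setTo c I true) (1 : ℤ)) := by
        rw [serreDiag_single, map_sum]
        refine sum_congr rfl fun I hI => ?_
        rw [map_smul, map_tmul, bdryFace_single, freeSet_setTo,
          Finset.sdiff_sdiff_eq_self (mem_powerset.1 hI), sum_tmul, smul_sum]
        refine sum_congr rfl fun i _ => ?_
        rw [pExp_setTo, Finset.sdiff_sdiff_eq_self (mem_powerset.1 hI), LinearMap.id_apply,
          ← smul_tmul', smul_smul, pow_add]
    _ = _ := sum_powerset_sum_mem _ _
    _ = markedSum c ε true := by
        refine sum_congr rfl fun i _ => sum_congr rfl fun I hI => ?_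
        have hiI : i ∉ I := fun h => notMem_erase i _ (mem_powerset.1 hI h)
        rw [sdiff_insert, ← erase_sdiff_comm, setTo_insert, shufExp_insert_left hiI,
          filter_insert, if_neg (lt_irrefl i), pExp_eq_add (mem_powerset.1 hI)]
        congr 2
        ring

theorem map_koszul_bdryFace_serreDiag_single (ε : Bool) (c : CubeFace n) :
    TensorProduct.map (koszul n) (bdryFace n ε) (serreDiag n (Finsupp.single c 1)) =
      markedSum c false ε := by
  calc _ = ∑ I ∈ (freeSet c).powerset, ∑ j ∈ freeSet c \ I,
        ((-1 : ℤ) ^ (shufExp I (freeSet c \ I) + #I + #((freeSet c \ I).filter (· < j)))) •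
          (Finsupp.single (setTo c (freeSet c \ I) false) (1 : ℤ) ⊗ₜ[ℤ]
            Finsupp.single (Function.update (setTo c I true) j (some ε)) (1 : ℤ)) := by
        rw [serreDiag_single, map_sum]
        refine sum_congr rfl fun I hI => ?_
        rw [map_smul, map_tmul, koszul_single, bdryFace_single, faceDim, freeSet_setTo,
          freeSet_setTo, Finset.sdiff_sdiff_eq_self (mem_powerset.1 hI), tmul_sum, smul_sum]
        refine sum_congr rfl fun j _ => ?_
        rw [pExp_setTo, smul_tmul_smul, smul_smul, ← pow_add, ← pow_add, add_assoc]
    _ = _ := sum_powerset_sum_sdiff _ _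
    _ = markedSum c false ε := by
        refine sum_congr rfl fun j hj => sum_congr rfl fun I hI => ?_
        have hjI : j ∉ I := fun h => notMem_erase j _ (mem_powerset.1 hI h)
        have hjJ : j ∉ (freeSet c).erase j \ I := by simp
        have hsplit : freeSet c \ I = insert j ((freeSet c).erase j \ I) := by
          rw [erase_sdiff_comm, insert_erase (mem_sdiff.2 ⟨hj, hjI⟩)]
        rw [hsplit, setTo_insert, shufExp_insert_right I hjJ, filter_insert, if_neg (lt_irrefl j),
          pExp_eq_add (mem_powerset.1 hI), ← card_filter_lt_add_card_filter_gt hjI]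
        -- the Koszul sign cancels, mod 2, the elements of `I` above `j` counted by the shuffle sign
        congr 1
        exact neg_one_pow_congr (by simp only [Nat.even_iff]; omega)

end

/-- The Serre diagonal on the cellular chain complex of the
standard `n`-cube is a chain map: `Δ ∘ ∂ = (∂ ⊗ id + id ⊗ ∂) ∘ Δ`, where on
homogeneous elements `(id ⊗ ∂)(x ⊗ y) = (−1)^{dim x} x ⊗ ∂y`
(Koszul sign convention). -/
theorem serreDiag_chain_map (n : ℕ) :
    (serreDiag n).comp (bdry n) =
      (TensorProduct.map (bdry n) LinearMap.id
        + TensorProduct.map (koszul n) (bdry n)).comp (serreDiag n) := by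
  ext c : 2
  change serreDiag n (bdry n (Finsupp.single c 1)) =
    TensorProduct.map (bdry n) LinearMap.id (serreDiag n (Finsupp.single c 1)) +
      TensorProduct.map (koszul n) (bdry n) (serreDiag n (Finsupp.single c 1))
  simp only [bdry_eq_sub, LinearMap.sub_apply, map_sub, ← TensorProduct.mapBilinear_apply]
  simp only [TensorProduct.mapBilinear_apply, serreDiag_bdryFace_single,
    map_bdryFace_id_serreDiag_single, map_koszul_bdryFace_serreDiag_single]
  abel
end

section
/- The cup-one product measures the non-commutativity of the cup product on mod-2 simplicial cochains: for every simplicial set X and all a ∈ C^p(X), b ∈ C^q(X), one has δ(a⌣₁b) = (δa)⌣₁b + a⌣₁(δb) + a⌣b + b⌣a in C^{p+q}(X) (coefficients in ℤ/2). -/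
/-!
Mod-2 (non-normalized) simplicial cochains of a simplicial set, with the cup
product, Steenrod's cup-one product and related operations.

For a simplicial set `X`, a weakly increasing vertex map `f : [k] → [n]` and
`σ ∈ X_n`, the face `σ(f 0, …, f k) ∈ X_k` is obtained by applying `X` to the
corresponding monotone map.  `Ch X p = X_p → ℤ/2` is the group of mod-2
cochains of degree `p`; `ι` includes it into the total cochain group `TCh X`
(so that cochains whose degrees are given by different, but equal, numerical
expressions can be compared).
-/

open CategoryTheory Simplicial

/-- Mod-2 (non-normalized) simplicial cochains of degree `p`. -/
abbrev Ch (X : SSet) (p : ℕ) : Type _ := X _⦋p⦌ → ZMod 2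

/-- The total cochain group (all degrees at once). -/
abbrev TCh (X : SSet) : Type _ := ∀ n : ℕ, X _⦋n⦌ → ZMod 2

/-- The face `σ(f 0, …, f k)` of a simplex `σ ∈ X_n` along a monotone vertex
map `f : [k] → [n]`. -/
def face (X : SSet) {k n : ℕ} (f : Fin (k + 1) →o Fin (n + 1)) (σ : X _⦋n⦌) : X _⦋k⦌ :=
  X.map (SimplexCategory.mkHom f).op σ

/-- Helper building a monotone vertex map from a function on `ℕ`. -/
def mkVert {m n : ℕ} (f : ℕ → ℕ) (hb : ∀ l, l < m + 1 → f l < n + 1)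
    (hm : ∀ k l, k ≤ l → l < m + 1 → f k ≤ f l) : Fin (m + 1) →o Fin (n + 1) where
  toFun l := ⟨f l.1, hb l.1 l.isLt⟩
  monotone' k l h := by
    simpa [Fin.mk_le_mk] using hm k.1 l.1 (Fin.le_def.mp h) l.isLt

/-- Inclusion of degree-`p` cochains into the total cochain group. -/
def ι (X : SSet) (p : ℕ) (a : Ch X p) : TCh X := fun n =>
  if h : n = p then fun σ => a (cast (by rw [h]) σ) else 0

/-- Coboundary `(δa)(σ) = Σ_{i=0}^{p+1} a(∂_i σ)`. -/
def cobd (X : SSet) (p : ℕ) (a : Ch X p) : Ch X (p + 1) :=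
  fun σ => ∑ i : Fin (p + 2), a (X.map (SimplexCategory.δ i).op σ)

/-- The cup product `(a ⌣ b)(σ) = a(σ(0,…,p)) · b(σ(p,…,p+q))`. -/
def cup (X : SSet) (p q : ℕ) (a : Ch X p) (b : Ch X q) : Ch X (p + q) :=
  fun σ =>
    a (face X (mkVert (m := p) (n := p + q) (fun l => l)
        (fun l hl => by beta_reduce; omega) (fun k l h _ => h)) σ) *
    b (face X (mkVert (m := q) (n := p + q) (fun l => p + l)
        (fun l hl => by beta_reduce; omega) (fun k l h _ => by beta_reduce; omega)) σ)

/-- Steenrod's cup-one product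
`(a ⌣₁ b)(σ) = Σ_{i=0}^{p−1} a(σ(0,…,i,i+q,…,n)) · b(σ(i,…,i+q))`,
for `σ ∈ X_n`, `n = p + q − 1` (so `a ⌣₁ b = 0` when `p = 0`). -/
def cup1 (X : SSet) (p q : ℕ) (a : Ch X p) (b : Ch X q) : Ch X (p + q - 1) :=
  fun σ => ∑ i : Fin p,
    a (face X (mkVert (m := p) (n := p + q - 1)
        (fun l => if l ≤ i.1 then l else l + q - 1)
        (fun l hl => by have := i.isLt; beta_reduce; split <;> omega)
        (fun k l h hl => by have := i.isLt; beta_reduce; split_ifs <;> omega)) σ) *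
    b (face X (mkVert (m := q) (n := p + q - 1)
        (fun l => i.1 + l)
        (fun l hl => by have := i.isLt; beta_reduce; omega)
        (fun k l h _ => by beta_reduce; omega)) σ)

def clampF (n : ℕ) (u : ℕ → ℕ) : ℕ → ℕ := fun l => match l with
  | 0 => min (u 0) n
  | l+1 => max (clampF n u l) (min (u (l+1)) n)

lemma clampF_le (n : ℕ) (u : ℕ → ℕ) (l : ℕ) : clampF n u l ≤ n := by
  induction l with
  | zero => exact min_le_right _ _
  | succ l ih => exact max_le ih (min_le_right _ _)

lemma clampF_mono (n : ℕ) (u : ℕ → ℕ) : Monotone (clampF n u) :=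
  monotone_nat_of_le_succ fun l => le_max_left _ _

def vmap {k n : ℕ} (u : ℕ → ℕ) : Fin (k+1) →o Fin (n+1) where
  toFun l := ⟨clampF n u l.1, Nat.lt_succ_of_le (clampF_le n u l.1)⟩
  monotone' x y h := by
    simpa [Fin.le_def] using clampF_mono n u (Fin.le_def.mp h)

lemma vmap_eq {k n : ℕ} (f : Fin (k+1) →o Fin (n+1)) (u : ℕ → ℕ)
    (hu : ∀ l : Fin (k+1), (f l).1 = u l.1) : vmap u = f := by
  have key : ∀ l (hl : l < k+1), clampF n u l = u l := by
    intro l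
    induction l with
    | zero =>
        intro hl
        have h0 := hu ⟨0, hl⟩
        have := (f ⟨0, hl⟩).isLt
        simp only [Fin.val_mk] at h0
        simp only [clampF]
        omega
    | succ l ih =>
        intro hl
        have hl' : l < k + 1 := by omega
        have h1 := hu ⟨l, hl'⟩
        have h2 := hu ⟨l+1, hl⟩
        have hmono := f.monotone (show (⟨l, hl'⟩ : Fin (k+1)) ≤ ⟨l+1, hl⟩ by simp [Fin.le_def])
        rw [Fin.le_def] at hmono
        have hb := (f ⟨l+1, hl⟩).isLt
        simp only [Fin.val_mk] at h1 h2
        simp only [clampF, ih hl']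
        omega
  ext l
  simp only [vmap, OrderHom.coe_mk]
  exact (key l.1 l.isLt).trans (hu l).symm

lemma face_vmap (X : SSet) {k n : ℕ} (f : Fin (k+1) →o Fin (n+1)) (σ : X _⦋n⦌)
    (u : ℕ → ℕ) (hu : ∀ l : Fin (k+1), (f l).1 = u l.1) :
    face X f σ = face X (vmap u) σ := by rw [vmap_eq f u hu]

lemma vmap_congr {k n : ℕ} (u u' : ℕ → ℕ) (h : ∀ l, l ≤ k → u l = u' l) :
    vmap (k := k) (n := n) u = vmap u' := by
  have key : ∀ l, l ≤ k → clampF n u l = clampF n u' l := by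
    intro l
    induction l with
    | zero => intro hl; simp only [clampF, h 0 hl]
    | succ l ih => intro hl; simp only [clampF, ih (by omega), h (l+1) hl]
  ext l
  simp only [vmap, OrderHom.coe_mk]
  exact key l.1 (by omega)

-- composition lemmas
lemma d_face (X : SSet) {k n : ℕ} (j : Fin (k+2)) (F : Fin (k+2) →o Fin (n+1)) (σ : X _⦋n⦌) :
    X.map (SimplexCategory.δ j).op (face X F σ)
      = face X (F.comp (SimplexCategory.δ j).toOrderHom) σ := by
  dsimp only [face]
  rw [← FunctorToTypes.map_comp_apply, ← op_comp]
  rfl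

lemma face_d (X : SSet) {k n : ℕ} (j : Fin (n+2)) (f : Fin (k+1) →o Fin (n+1)) (σ : X _⦋n+1⦌) :
    face X f (X.map (SimplexCategory.δ j).op σ)
      = face X ((SimplexCategory.δ j).toOrderHom.comp f) σ := by
  dsimp only [face]
  rw [← FunctorToTypes.map_comp_apply, ← op_comp]
  rfl

lemma succAbove_val {n : ℕ} (j : Fin (n+2)) (l : Fin (n+1)) :
    (j.succAbove l).1 = if l.1 < j.1 then l.1 else l.1 + 1 := by
  rw [Fin.succAbove]
  split_ifs with h1 h2 h2 <;>
    first
      | rfl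
      | (exfalso; rw [Fin.lt_def] at h1; simp only [Fin.coe_castSucc] at h1; omega)

lemma delta_toOrderHom_val {n : ℕ} (j : Fin (n+2)) (l : Fin (n+1)) :
    ((SimplexCategory.δ j).toOrderHom l).1 = if l.1 < j.1 then l.1 else l.1 + 1 :=
  succAbove_val j l

def dl (j v : ℕ) : ℕ := if v < j then v else v + 1

lemma delta_val {n : ℕ} (j : Fin (n+2)) (l : Fin (n+1)) :
    ((SimplexCategory.δ j).toOrderHom l).1 = dl j.1 l.1 :=
  (delta_toOrderHom_val j l).trans rfl

def dlFin {n : ℕ} (j : Fin (n+2)) (l : Fin (n+1)) : Fin (n+2) :=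
  ⟨dl j.1 l.1, by have := j.isLt; have := l.isLt; simp only [dl]; split <;> omega⟩

lemma delta_apply {n : ℕ} (j : Fin (n+2)) (l : Fin (n+1)) :
    (SimplexCategory.δ j).toOrderHom l = dlFin j l :=
  Fin.ext ((delta_val j l).trans rfl)

lemma mkVert_val {m n : ℕ} (f : ℕ → ℕ) (hb) (hm) (x : Fin (m+1)) :
    (mkVert (m := m) (n := n) f hb hm x).1 = f x.1 := rfl

lemma delta_val' {n : ℕ} (j : Fin (n+2)) (l : Fin (SimplexCategory.len ⦋n⦌ + 1)) :
    ((SimplexCategory.δ j).toOrderHom l).1 = dl j.1 l.1 :=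
  delta_val j l

def tr (X : SSet) {d e : ℕ} (h : d = e) (c : Ch X d) : Ch X e :=
  fun σ => c (cast (by rw [h]) σ)

lemma ι_tr (X : SSet) {d e : ℕ} (h : d = e) (c : Ch X d) :
    ι X d c = ι X e (tr X h c) := by subst h; rfl

lemma ι_add (X : SSet) (d : ℕ) (c c' : Ch X d) :
    ι X d (c + c') = ι X d c + ι X d c' := by
  funext n
  by_cases h : n = d <;> simp [ι, h] <;> rfl

lemma face_cast (X : SSet) {k d e : ℕ} (h : d = e) (pf : X _⦋e⦌ = X _⦋d⦌)
    (f : Fin (k+1) →o Fin (d+1)) (σ : X _⦋e⦌) (u : ℕ → ℕ)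
    (hu : ∀ l : Fin (k+1), (f l).1 = u l.1) :
    face X f (cast pf σ) = face X (vmap (k := k) (n := e) u) σ := by
  subst h
  exact face_vmap X f σ u hu

lemma dl_lt {k : ℕ} (j : Fin (k+2)) (l : Fin (k+1)) : dl j.1 l.1 < k+2 := by
  have := j.isLt; have := l.isLt
  simp only [dl]; split <;> omega

lemma d_face_vmap (X : SSet) {k n : ℕ} (j : Fin (k+2)) (F : Fin (k+2) →o Fin (n+1)) (σ : X _⦋n⦌)
    (u : ℕ → ℕ) (hu : ∀ l : Fin (k+1), (F ⟨dl j.1 l.1, dl_lt j l⟩).1 = u l.1) :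
    X.map (SimplexCategory.δ j).op (face X F σ) = face X (vmap (k := k) (n := n) u) σ := by
  rw [d_face]
  refine face_vmap X _ σ u fun l => ?_
  have e : (SimplexCategory.δ j).toOrderHom l = ⟨dl j.1 l.1, dl_lt j l⟩ :=
    Fin.ext ((delta_val j l).trans rfl)
  calc ((F.comp (SimplexCategory.δ j).toOrderHom) l).1
      = (F ((SimplexCategory.δ j).toOrderHom l)).1 := rfl
    _ = (F ⟨dl j.1 l.1, dl_lt j l⟩).1 := by rw [e]
    _ = u l.1 := hu l

lemma d_face_cast_vmap (X : SSet) {k d e : ℕ} (h : d = e) (pf : X _⦋e⦌ = X _⦋d⦌) (j : Fin (k+2))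
    (F : Fin (k+2) →o Fin (d+1)) (σ : X _⦋e⦌) (u : ℕ → ℕ)
    (hu : ∀ l : Fin (k+1), (F ⟨dl j.1 l.1, dl_lt j l⟩).1 = u l.1) :
    X.map (SimplexCategory.δ j).op (face X F (cast pf σ)) = face X (vmap (k := k) (n := e) u) σ := by
  subst h
  exact d_face_vmap X j F σ u hu

lemma fin_double {M : Type*} [AddCommMonoid M] (N K : ℕ) (f : ℕ → ℕ → M) :
    (∑ j : Fin N, ∑ i : Fin K, f j.1 i.1)
      = ∑ j ∈ Finset.range N, ∑ i ∈ Finset.range K, f j i := by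
  simp only [Fin.sum_univ_eq_sum_range]
  exact Fin.sum_univ_eq_sum_range (fun j => ∑ i ∈ Finset.range K, f j i) N

section conv
variable (X : SSet) (p q : ℕ) (a : Ch X p) (b : Ch X q) (σ : X _⦋p+q-1+1⦌)

lemma conv_L :
    cobd X (p+q-1) (cup1 X p q a b) σ
      = ∑ j ∈ Finset.range (p+q-1+2), ∑ i ∈ Finset.range p,
          a (face X (vmap (k := p) (n := p+q-1+1)
              (fun l => dl j (if l ≤ i then l else l + q - 1))) σ)
          * b (face X (vmap (k := q) (n := p+q-1+1) (fun l => dl j (i + l))) σ) := by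
  rw [← fin_double]
  simp only [cobd, cup1]
  refine Finset.sum_congr rfl fun j _ => Finset.sum_congr rfl fun i _ => ?_
  congr 1
  · rw [face_d]
    exact congrArg a (face_vmap X _ σ _ (fun l => delta_val j _))
  · rw [face_d]
    exact congrArg b (face_vmap X _ σ _ (fun l => delta_val j _))

lemma conv_R1 (h1 : (p+1)+q-1 = p+q-1+1) :
    tr X h1 (cup1 X (p+1) q (cobd X p a) b) σ
      = ∑ i ∈ Finset.range (p+1), ∑ j ∈ Finset.range (p+2),
          a (face X (vmap (k := p) (n := p+q-1+1)
              (fun l => if dl j l ≤ i then dl j l else dl j l + q - 1)) σ)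
          * b (face X (vmap (k := q) (n := p+q-1+1) (fun l => i + l)) σ) := by
  rw [← fin_double]
  show cup1 X (p+1) q (cobd X p a) b (cast _ σ) = _
  simp only [cup1, cobd]
  refine Finset.sum_congr rfl fun i _ => ?_
  rw [Finset.sum_mul]
  refine Finset.sum_congr rfl fun j _ => ?_
  congr 1
  · exact congrArg a (d_face_cast_vmap X h1 _ j _ σ _ (fun l => rfl))
  · exact congrArg b (face_cast X h1 _ _ σ _ (fun l => rfl))

lemma conv_R2 (h2 : p+(q+1)-1 = p+q-1+1) :
    tr X h2 (cup1 X p (q+1) a (cobd X q b)) σ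
      = ∑ i ∈ Finset.range p, ∑ j ∈ Finset.range (q+2),
          a (face X (vmap (k := p) (n := p+q-1+1) (fun l => if l ≤ i then l else l + q)) σ)
          * b (face X (vmap (k := q) (n := p+q-1+1) (fun l => i + dl j l)) σ) := by
  rw [← fin_double]
  show cup1 X p (q+1) a (cobd X q b) (cast _ σ) = _
  simp only [cup1, cobd]
  refine Finset.sum_congr rfl fun i _ => ?_
  rw [Finset.mul_sum]
  refine Finset.sum_congr rfl fun j _ => ?_
  congr 1
  · exact congrArg a (face_cast X h2 _ _ σ _ (fun l => rfl))
  · exact congrArg b (d_face_cast_vmap X h2 _ j _ σ _ (fun l => rfl))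

lemma conv_R3 (h3 : p+q = p+q-1+1) :
    tr X h3 (cup X p q a b) σ
      = a (face X (vmap (k := p) (n := p+q-1+1) (fun l => l)) σ)
        * b (face X (vmap (k := q) (n := p+q-1+1) (fun l => p + l)) σ) := by
  show cup X p q a b (cast _ σ) = _
  simp only [cup]
  congr 1
  · exact congrArg a (face_cast X h3 _ _ σ _ (fun l => rfl))
  · exact congrArg b (face_cast X h3 _ _ σ _ (fun l => rfl))

lemma conv_R4 (h4 : q+p = p+q-1+1) :
    tr X h4 (cup X q p b a) σ
      = a (face X (vmap (k := p) (n := p+q-1+1) (fun l => q + l)) σ)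
        * b (face X (vmap (k := q) (n := p+q-1+1) (fun l => l)) σ) := by
  show cup X q p b a (cast _ σ) = _
  simp only [cup]
  rw [mul_comm]
  congr 1
  · exact congrArg a (face_cast X h4 _ _ σ _ (fun l => rfl))
  · exact congrArg b (face_cast X h4 _ _ σ _ (fun l => rfl))

end conv

lemma core (p q : ℕ) (L R1 R2 : ℕ → ℕ → ZMod 2) (R3 R4 : ZMod 2)
    (hA : ∀ i j, i < p → j ≤ i → L j i = R1 (i+1) j)
    (hB : ∀ i k, i < p → k < q → L (i+1+k) i = R2 i (1+k))
    (hC : ∀ i k, i < p → k < p - i → L (i+q+1+k) i = R1 i (i+2+k))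
    (hD : ∀ i, i < p → R1 (i+1) (i+1) = R2 i 0)
    (hE : ∀ i, i < p → R1 i (i+1) = R2 i (q+1))
    (hF : R1 0 0 = R4)
    (hG : R1 p (p+1) = R3) :
    ∑ j ∈ Finset.range (p+q+1), ∑ i ∈ Finset.range p, L j i
      = (∑ i ∈ Finset.range (p+1), ∑ j ∈ Finset.range (p+2), R1 i j)
        + (∑ i ∈ Finset.range p, ∑ j ∈ Finset.range (q+2), R2 i j) + R3 + R4 := by
  have hsplit : ∀ i ∈ Finset.range p,
      ∑ j ∈ Finset.range (p+q+1), L j i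
        = ((∑ j ∈ Finset.Ico 0 (i+1), L j i) + ∑ j ∈ Finset.Ico (i+1) (i+q+1), L j i)
          + ∑ j ∈ Finset.Ico (i+q+1) (p+q+1), L j i := by
    intro i hi
    have hi' : i < p := Finset.mem_range.mp hi
    rw [Finset.range_eq_Ico,
      ← Finset.sum_Ico_consecutive _ (by omega : 0 ≤ i+q+1) (by omega : i+q+1 ≤ p+q+1),
      ← Finset.sum_Ico_consecutive _ (by omega : 0 ≤ i+1) (by omega : i+1 ≤ i+q+1)]
  have h1split : ∀ i ∈ Finset.range (p+1),
      ∑ j ∈ Finset.range (p+2), R1 i j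
        = (((∑ j ∈ Finset.Ico 0 i, R1 i j) + R1 i i) + R1 i (i+1))
          + ∑ j ∈ Finset.Ico (i+2) (p+2), R1 i j := by
    intro i hi
    have hi' : i < p + 1 := Finset.mem_range.mp hi
    rw [Finset.range_eq_Ico,
      ← Finset.sum_Ico_consecutive _ (by omega : 0 ≤ i+2) (by omega : i+2 ≤ p+2),
      ← Finset.sum_Ico_consecutive _ (by omega : 0 ≤ i) (by omega : i ≤ i+2)]
    have e : ∑ j ∈ Finset.Ico i (i+2), R1 i j = R1 i i + R1 i (i+1) := by
      rw [show i+2 = (i+1)+1 from rfl, Finset.sum_Ico_succ_top (by omega),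
        Finset.sum_Ico_succ_top (by omega), Finset.Ico_self, Finset.sum_empty, zero_add]
    rw [e, ← add_assoc]
  have h2split : ∀ i ∈ Finset.range p,
      ∑ j ∈ Finset.range (q+2), R2 i j
        = (R2 i 0 + ∑ j ∈ Finset.Ico 1 (q+1), R2 i j) + R2 i (q+1) := by
    intro i _
    rw [Finset.range_eq_Ico,
      ← Finset.sum_Ico_consecutive _ (by omega : 0 ≤ q+1) (by omega : q+1 ≤ q+2),
      ← Finset.sum_Ico_consecutive _ (by omega : 0 ≤ 1) (by omega : 1 ≤ q+1)]
    have e1 : ∑ j ∈ Finset.Ico 0 1, R2 i j = R2 i 0 := by simp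
    have e2 : ∑ j ∈ Finset.Ico (q+1) (q+2), R2 i j = R2 i (q+1) := by
      rw [show q+2 = (q+1)+1 from rfl, Finset.sum_Ico_succ_top (by omega),
        Finset.Ico_self, Finset.sum_empty, zero_add]
    rw [e1, e2]
  rw [Finset.sum_comm, Finset.sum_congr rfl hsplit, Finset.sum_congr rfl h1split,
    Finset.sum_congr rfl h2split]
  simp only [Finset.sum_add_distrib]
  have eA : (∑ i ∈ Finset.range p, ∑ j ∈ Finset.Ico 0 (i+1), L j i)
      = ∑ i ∈ Finset.range (p+1), ∑ j ∈ Finset.Ico 0 i, R1 i j := by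
    rw [Finset.sum_range_succ' (fun i => ∑ j ∈ Finset.Ico 0 i, R1 i j) p]
    simp only [Finset.Ico_self, Finset.sum_empty, add_zero]
    refine Finset.sum_congr rfl fun i hi => Finset.sum_congr rfl fun j hj => ?_
    exact hA i j (Finset.mem_range.mp hi) (by have := Finset.mem_Ico.mp hj; omega)
  have eB : (∑ i ∈ Finset.range p, ∑ j ∈ Finset.Ico (i+1) (i+q+1), L j i)
      = ∑ i ∈ Finset.range p, ∑ j ∈ Finset.Ico 1 (q+1), R2 i j := by
    refine Finset.sum_congr rfl fun i hi => ?_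
    have hi' := Finset.mem_range.mp hi
    rw [Finset.sum_Ico_eq_sum_range, Finset.sum_Ico_eq_sum_range,
      (by omega : i+q+1 - (i+1) = q), (by omega : q+1-1 = q)]
    exact Finset.sum_congr rfl fun k hk => hB i k hi' (Finset.mem_range.mp hk)
  have eC : (∑ i ∈ Finset.range p, ∑ j ∈ Finset.Ico (i+q+1) (p+q+1), L j i)
      = ∑ i ∈ Finset.range (p+1), ∑ j ∈ Finset.Ico (i+2) (p+2), R1 i j := by
    rw [Finset.sum_range_succ]
    simp only [Finset.Ico_self, Finset.sum_empty, add_zero]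
    refine Finset.sum_congr rfl fun i hi => ?_
    have hi' := Finset.mem_range.mp hi
    rw [Finset.sum_Ico_eq_sum_range, Finset.sum_Ico_eq_sum_range,
      (by omega : p+q+1 - (i+q+1) = p - i), (by omega : p+2 - (i+2) = p - i)]
    exact Finset.sum_congr rfl fun k hk => hC i k hi' (Finset.mem_range.mp hk)
  have eD : (∑ i ∈ Finset.range (p+1), R1 i i) = R4 + ∑ i ∈ Finset.range p, R2 i 0 := by
    rw [Finset.sum_range_succ' (fun i => R1 i i) p, hF, add_comm]
    congr 1
    exact Finset.sum_congr rfl fun i hi => hD i (Finset.mem_range.mp hi)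
  have eE : (∑ i ∈ Finset.range (p+1), R1 i (i+1))
      = (∑ i ∈ Finset.range p, R2 i (q+1)) + R3 := by
    rw [Finset.sum_range_succ, hG]
    congr 1
    exact Finset.sum_congr rfl fun i hi => hE i (Finset.mem_range.mp hi)
  rw [eA, eB, eC, eD, eE]
  have h2 : (2 : ZMod 2) = 0 := rfl
  set y1 := ∑ i ∈ Finset.range (p+1), ∑ j ∈ Finset.Ico 0 i, R1 i j
  set m := ∑ i ∈ Finset.range p, ∑ j ∈ Finset.Ico 1 (q+1), R2 i j
  set y3 := ∑ i ∈ Finset.range (p+1), ∑ j ∈ Finset.Ico (i+2) (p+2), R1 i j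
  set e0 := ∑ i ∈ Finset.range p, R2 i 0
  set eq' := ∑ i ∈ Finset.range p, R2 i (q+1)
  linear_combination (-(e0 + eq' + R3 + R4)) * h2

lemma ι_zero (X : SSet) (d : ℕ) : ι X d (0 : Ch X d) = 0 := by
  funext n
  by_cases h : n = d <;> simp [ι, h] <;> rfl

/-- The cup-one product measures the non-commutativity of the
cup product on mod-2 simplicial cochains: for every simplicial set `X` and all
`a ∈ C^p(X)`, `b ∈ C^q(X)`, one has
`δ(a ⌣₁ b) = (δa) ⌣₁ b + a ⌣₁ (δb) + a ⌣ b + b ⌣ a` in `C^{p+q}(X)`. -/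
theorem cup1_coboundary (X : SSet) (p q : ℕ) (a : Ch X p) (b : Ch X q) :
    ι X (p + q - 1 + 1) (cobd X (p + q - 1) (cup1 X p q a b)) =
      ι X ((p + 1) + q - 1) (cup1 X (p + 1) q (cobd X p a) b)
      + ι X (p + (q + 1) - 1) (cup1 X p (q + 1) a (cobd X q b))
      + ι X (p + q) (cup X p q a b)
      + ι X (q + p) (cup X q p b a) := by
  by_cases hpq : p + q = 0
  · obtain ⟨hp, hq⟩ : p = 0 ∧ q = 0 := by omega
    subst hp; subst hq
    have hface : ∀ (m : ℕ) (σ : X _⦋m⦌) (hm : m = 0) (g g' : Fin (0+1) →o Fin (m+1)),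
        face X g σ = face X g' σ := by
      intro m σ hm g g'
      subst hm
      congr 1
      ext l
      have h1 := (g l).isLt
      have h2 := (g' l).isLt
      omega
    have hzero : cobd X (0+0-1) (cup1 X 0 0 a b) = 0 := by
      funext σ
      simp [cobd, cup1]
    rw [hzero, ι_zero]
    have hc2 : cup1 X 0 (0+1) a (cobd X 0 b) = 0 := by
      funext σ
      simp [cup1]
    rw [hc2, ι_zero]
    have hadd : ∀ x : ZMod 2, x + x = 0 := by decide
    have hc1 : cup1 X 1 0 (cobd X 0 a) b = (0 : Ch X (0+1+0-1)) := by
      funext σ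
      simp only [cup1, cobd]
      rw [Fin.sum_univ_one, Fin.sum_univ_two]
      rw [d_face, d_face]
      rw [hface _ σ rfl ((mkVert (m := 1) (n := 1+0-1) _ _ _).comp
            (SimplexCategory.δ 0).toOrderHom) (OrderHom.id),
          hface _ σ rfl ((mkVert (m := 1) (n := 1+0-1) _ _ _).comp
            (SimplexCategory.δ 1).toOrderHom) (OrderHom.id)]
      rw [hadd, zero_mul]
      rfl
    rw [hc1, ι_zero, zero_add, zero_add]
    rw [← ι_add]
    have hadd2 : ∀ x : ZMod 2, x + x = 0 := hadd
    have hc34 : cup X 0 0 a b + cup X 0 0 b a = 0 := by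
      funext σ
      rw [Pi.add_apply]
      simp only [cup]
      rw [hface _ σ rfl (mkVert (m := 0) (n := 0+0) (fun l => l) _ _) OrderHom.id,
          hface _ σ rfl (mkVert (m := 0) (n := 0+0) (fun l => 0 + l) _ _) OrderHom.id,
          mul_comm (b (face X OrderHom.id σ)) (a (face X OrderHom.id σ))]
      exact hadd _
    rw [hc34, ι_zero]
  · have h1 : (p+1)+q-1 = p+q-1+1 := by omega
    have h2 : p+(q+1)-1 = p+q-1+1 := by omega
    have h3 : p+q = p+q-1+1 := by omega
    have h4 : q+p = p+q-1+1 := by omega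
    rw [ι_tr X h1, ι_tr X h2, ι_tr X h3, ι_tr X h4, ← ι_add, ← ι_add, ← ι_add]
    refine congrArg (ι X (p+q-1+1)) ?_
    funext σ
    rw [Pi.add_apply, Pi.add_apply, Pi.add_apply]
    rw [conv_L X p q a b σ, conv_R1 X p q a b σ h1, conv_R2 X p q a b σ h2,
      conv_R3 X p q a b σ h3, conv_R4 X p q a b σ h4]
    rw [(by omega : p+q-1+2 = p+q+1)]
    have Tc : ∀ (u u' v v' : ℕ → ℕ), (∀ l, l ≤ p → u l = u' l) → (∀ l, l ≤ q → v l = v' l) →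
        a (face X (vmap (k := p) (n := p+q-1+1) u) σ)
            * b (face X (vmap (k := q) (n := p+q-1+1) v) σ)
          = a (face X (vmap u') σ) * b (face X (vmap v') σ) := by
      intro u u' v v' hu hv
      rw [vmap_congr u u' hu, vmap_congr v v' hv]
    refine core p q
      (fun j i => a (face X (vmap (k := p) (n := p+q-1+1)
          (fun l => dl j (if l ≤ i then l else l + q - 1))) σ)
        * b (face X (vmap (k := q) (n := p+q-1+1) (fun l => dl j (i + l))) σ))
      (fun i j => a (face X (vmap (k := p) (n := p+q-1+1)
          (fun l => if dl j l ≤ i then dl j l else dl j l + q - 1)) σ)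
        * b (face X (vmap (k := q) (n := p+q-1+1) (fun l => i + l)) σ))
      (fun i j => a (face X (vmap (k := p) (n := p+q-1+1)
          (fun l => if l ≤ i then l else l + q)) σ)
        * b (face X (vmap (k := q) (n := p+q-1+1) (fun l => i + dl j l)) σ))
      _ _ ?_ ?_ ?_ ?_ ?_ ?_ ?_
    · intro i j hi hj
      exact Tc _ _ _ _
        (fun l hl => by (try simp only [dl]); (try split_ifs); all_goals omega)
        (fun l hl => by (try simp only [dl]); (try split_ifs); all_goals omega)
    · intro i k hi hk
      exact Tc _ _ _ _
        (fun l hl => by (try simp only [dl]); (try split_ifs); all_goals omega)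
        (fun l hl => by (try simp only [dl]); (try split_ifs); all_goals omega)
    · intro i k hi hk
      exact Tc _ _ _ _
        (fun l hl => by (try simp only [dl]); (try split_ifs); all_goals omega)
        (fun l hl => by (try simp only [dl]); (try split_ifs); all_goals omega)
    · intro i hi
      exact Tc _ _ _ _
        (fun l hl => by (try simp only [dl]); (try split_ifs); all_goals omega)
        (fun l hl => by (try simp only [dl]); (try split_ifs); all_goals omega)
    · intro i hi
      exact Tc _ _ _ _
        (fun l hl => by (try simp only [dl]); (try split_ifs); all_goals omega)
        (fun l hl => by (try simp only [dl]); (try split_ifs); all_goals omega)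
    · exact Tc _ _ _ _
        (fun l hl => by (try simp only [dl]); (try split_ifs); all_goals omega)
        (fun l hl => by (try simp only [dl]); (try split_ifs); all_goals omega)
    · exact Tc _ _ _ _
        (fun l hl => by (try simp only [dl]); (try split_ifs); all_goals omega)
        (fun l hl => by (try simp only [dl]); (try split_ifs); all_goals omega)
end

section
/- Any two order simplices of the standard triangulation of the cube meet in a common face: for permutations σ and π of {1,…,n}, the intersection Δ_σ ∩ Δ_π equals the convex hull of the set of their common chain vertices, {v_0(σ),…,v_n(σ)} ∩ {v_0(π),…,v_n(π)}. -/
/-!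
The standard triangulation of the `n`-cube `[0,1]ⁿ ⊆ ℝⁿ` by order simplices.
For a permutation `σ` of `{1,…,n}`, the order simplex `Δ_σ` consists of the
points `x` of the cube with `1 ≥ x_{σ(1)} ≥ x_{σ(2)} ≥ ⋯ ≥ x_{σ(n)} ≥ 0`,
and its vertices `v_0(σ), …, v_n(σ)` are the vertices of the maximal chain in
`{0,1}ⁿ` associated to `σ` (the `i`-th coordinate of `v_k(σ)` is `1` iff
`i ∈ {σ(1),…,σ(k)}`).
-/

/-- The order simplex `Δ_σ = {x ∈ [0,1]ⁿ : x_{σ(1)} ≥ x_{σ(2)} ≥ ⋯ ≥ x_{σ(n)}}`. -/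
def orderSimplex (n : ℕ) (σ : Equiv.Perm (Fin n)) : Set (Fin n → ℝ) :=
  {x | (∀ i, 0 ≤ x i ∧ x i ≤ 1) ∧ ∀ k l : Fin n, k ≤ l → x (σ l) ≤ x (σ k)}

/-- The vertex `v_k(σ)`: its `i`-th coordinate is `1` if `i ∈ {σ(1),…,σ(k)}`
and `0` otherwise. -/
def chainVertex (n : ℕ) (σ : Equiv.Perm (Fin n)) (k : Fin (n + 1)) : Fin n → ℝ :=
  fun i => if ((σ.symm i : Fin n) : ℕ) < (k : ℕ) then 1 else 0

lemma chainVertex_mem (n : ℕ) (σ : Equiv.Perm (Fin n)) (k : Fin (n + 1)) :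
    chainVertex n σ k ∈ orderSimplex n σ := by
  refine ⟨fun i => ?_, fun a b hab => ?_⟩
  · unfold chainVertex; split_ifs <;> norm_num
  · unfold chainVertex
    simp only [Equiv.symm_apply_apply]
    have : (a : ℕ) ≤ (b : ℕ) := hab
    split_ifs <;> norm_num <;> omega

lemma orderSimplex_convex (n : ℕ) (σ : Equiv.Perm (Fin n)) :
    Convex ℝ (orderSimplex n σ) := by
  intro x hx y hy a b ha hb hab
  refine ⟨fun i => ⟨?_, ?_⟩, fun k l hkl => ?_⟩
  · have h1 := (hx.1 i).1; have h2 := (hy.1 i).1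
    simp only [Pi.add_apply, Pi.smul_apply, smul_eq_mul]
    nlinarith
  · have h1 := (hx.1 i).2; have h2 := (hy.1 i).2
    simp only [Pi.add_apply, Pi.smul_apply, smul_eq_mul]
    nlinarith
  · have h1 := hx.2 k l hkl; have h2 := hy.2 k l hkl
    simp only [Pi.add_apply, Pi.smul_apply, smul_eq_mul]
    nlinarith

/-- Auxiliary: `Y 0 = 1`, `Y k = x (σ (k-1))` for `1 ≤ k ≤ n`, `Y k = 0` for `k > n`. -/
def auxY (n : ℕ) (σ : Equiv.Perm (Fin n)) (x : Fin n → ℝ) : ℕ → ℝ :=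
  fun k => if k = 0 then 1 else if h : k - 1 < n then x (σ ⟨k - 1, h⟩) else 0

lemma auxY_zero (n : ℕ) (σ : Equiv.Perm (Fin n)) (x : Fin n → ℝ) : auxY n σ x 0 = 1 := rfl

lemma auxY_succ (n : ℕ) (σ : Equiv.Perm (Fin n)) (x : Fin n → ℝ) (k : ℕ) (h : k < n) :
    auxY n σ x (k + 1) = x (σ ⟨k, h⟩) := by
  unfold auxY; rw [if_neg (by omega), dif_pos (show k + 1 - 1 < n by omega)]; rfl

lemma auxY_large (n : ℕ) (σ : Equiv.Perm (Fin n)) (x : Fin n → ℝ) (k : ℕ) (h : n < k) :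
    auxY n σ x k = 0 := by
  unfold auxY; rw [if_neg (by omega), dif_neg (by omega)]

lemma auxY_pos_eq (n : ℕ) (σ : Equiv.Perm (Fin n)) (x : Fin n → ℝ) (k : ℕ)
    (hk : 0 < k) (h : k - 1 < n) : auxY n σ x k = x (σ ⟨k - 1, h⟩) := by
  unfold auxY; rw [if_neg (by omega), dif_pos]

lemma auxY_antitone (n : ℕ) (σ : Equiv.Perm (Fin n)) (x : Fin n → ℝ)
    (hx : x ∈ orderSimplex n σ) (k : ℕ) : auxY n σ x (k + 1) ≤ auxY n σ x k := by
  rcases Nat.eq_zero_or_pos k with rfl | hk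
  · rw [auxY_zero]
    rcases Nat.lt_or_ge 0 n with h | h
    · rw [auxY_succ n σ x 0 h]; exact (hx.1 _).2
    · rw [auxY_large n σ x 1 (by omega)]; norm_num
  · rcases Nat.lt_or_ge k n with h | h
    · rw [auxY_succ n σ x k h]
      obtain ⟨k', rfl⟩ : ∃ k', k = k' + 1 := ⟨k - 1, by omega⟩
      rw [auxY_succ n σ x k' (by omega)]
      exact hx.2 ⟨k', by omega⟩ ⟨k' + 1, h⟩ (by simp [Fin.le_def])
    · rw [auxY_large n σ x (k + 1) (by omega)]
      rcases Nat.eq_or_lt_of_le h with heq | h'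
      · rw [auxY_pos_eq n σ x k hk (by omega)]
        exact (hx.1 _).1
      · rw [auxY_large n σ x k h']

/-- Any two order simplices of the standard triangulation of
the cube meet in a common face: for permutations `σ` and `π` of `{1,…,n}`, the
intersection `Δ_σ ∩ Δ_π` equals the convex hull of the set of their common
chain vertices `{v_0(σ),…,v_n(σ)} ∩ {v_0(π),…,v_n(π)}`. -/
theorem orderSimplices_inter_common_face (n : ℕ) (hn : 1 ≤ n)
    (σ π : Equiv.Perm (Fin n)) :
    orderSimplex n σ ∩ orderSimplex n π =
      convexHull ℝ (Set.range (chainVertex n σ) ∩ Set.range (chainVertex n π)) := by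
  apply Set.Subset.antisymm
  · rintro x ⟨hxσ, hxπ⟩
    set Y : ℕ → ℝ := auxY n σ x with hY
    set w : Fin (n + 1) → ℝ := fun k => Y (k : ℕ) - Y ((k : ℕ) + 1) with hw
    have hwnn : ∀ k : Fin (n + 1), 0 ≤ w k :=
      fun k => sub_nonneg.2 (auxY_antitone n σ x hxσ (k : ℕ))
    have hsum : ∑ k : Fin (n + 1), w k = 1 := by
      rw [hw, Fin.sum_univ_eq_sum_range (fun k => Y k - Y (k + 1)) (n + 1),
        Finset.sum_range_sub' Y (n + 1), hY, auxY_zero,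
        auxY_large n σ x (n + 1) (by omega)]
      ring
    have hrepr : ∑ k : Fin (n + 1), w k • chainVertex n σ k = x := by
      funext i
      rw [Finset.sum_apply]
      have hjn : ((σ.symm i : Fin n) : ℕ) < n := (σ.symm i).2
      set j : ℕ := ((σ.symm i : Fin n) : ℕ) with hj
      have hterm : ∀ k : Fin (n + 1), (w k • chainVertex n σ k) i
          = Y (max (k : ℕ) (j + 1)) - Y (max ((k : ℕ) + 1) (j + 1)) := by
        intro k
        simp only [Pi.smul_apply, smul_eq_mul, chainVertex, ← hj, hw]
        rcases lt_or_ge j (k : ℕ) with h | h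
        · rw [if_pos h, max_eq_left (by omega), max_eq_left (by omega)]; ring
        · rw [if_neg (by omega), max_eq_right (by omega), max_eq_right (by omega)]; ring
      rw [Finset.sum_congr rfl (fun k _ => hterm k),
        Fin.sum_univ_eq_sum_range (fun k => Y (max k (j + 1)) - Y (max (k + 1) (j + 1))) (n + 1),
        Finset.sum_range_sub' (fun k => Y (max k (j + 1))) (n + 1)]
      rw [Nat.max_eq_right (by omega : 0 ≤ j + 1), Nat.max_eq_left (by omega : j + 1 ≤ n + 1)]
      rw [hY, auxY_large n σ x (n + 1) (by omega), auxY_succ n σ x j hjn]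
      simp [hj]
    have hmem : ∀ k : Fin (n + 1), w k ≠ 0 →
        chainVertex n σ k ∈ Set.range (chainVertex n σ) ∩ Set.range (chainVertex n π) := by
      intro k hk
      refine ⟨⟨k, rfl⟩, ?_⟩
      rcases Nat.eq_or_lt_of_le (Nat.lt_succ_iff.mp k.2) with hkn | hkn
      · refine ⟨Fin.last n, ?_⟩
        funext i
        simp only [chainVertex, Fin.val_last]
        rw [if_pos (π.symm i).2, if_pos (by omega : ((σ.symm i : Fin n) : ℕ) < (k : ℕ))]
      · have hstrict : Y ((k : ℕ) + 1) < Y (k : ℕ) :=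
          lt_of_le_of_ne (auxY_antitone n σ x hxσ (k : ℕ))
            (fun h => hk (by rw [hw]; simp [h]))
        set c : ℝ := x (σ ⟨(k : ℕ), hkn⟩) with hc
        have hYc : Y ((k : ℕ) + 1) = c := by rw [hY]; exact auxY_succ n σ x (k : ℕ) hkn
        have claimB : ∀ i : Fin n, ((σ.symm i : Fin n) : ℕ) < (k : ℕ) ↔ c < x i := by
          intro i
          constructor
          · intro h
            have hk1 : 1 ≤ (k : ℕ) := by omega
            have h1 : x (σ ⟨(k : ℕ) - 1, by omega⟩) ≤ x (σ (σ.symm i)) :=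
              hxσ.2 (σ.symm i) ⟨(k : ℕ) - 1, by omega⟩ (by simp only [Fin.le_def]; omega)
            have h2 : Y (k : ℕ) = x (σ ⟨(k : ℕ) - 1, by omega⟩) := by
              rw [hY]; exact auxY_pos_eq n σ x (k : ℕ) hk1 (by omega)
            rw [Equiv.apply_symm_apply] at h1
            linarith [hstrict, hYc]
          · intro h
            by_contra hcon
            push_neg at hcon
            have h1 : x (σ (σ.symm i)) ≤ x (σ ⟨(k : ℕ), hkn⟩) :=
              hxσ.2 ⟨(k : ℕ), hkn⟩ (σ.symm i) (by simp only [Fin.le_def]; omega)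
            rw [Equiv.apply_symm_apply] at h1
            linarith
        set S : Finset (Fin n) := Finset.univ.filter (fun p : Fin n => c < x (π p)) with hS
        set m : ℕ := S.card with hm
        have hmn : m ≤ n := by
          rw [hm, hS]
          exact le_trans (Finset.card_filter_le _ _) (by simp)
        have claimA : ∀ p : Fin n, c < x (π p) ↔ (p : ℕ) < m := by
          intro p
          constructor
          · intro h
            have hsub : Finset.Iic p ⊆ S := by
              intro q hq
              rw [Finset.mem_Iic] at hq
              rw [hS, Finset.mem_filter]
              exact ⟨Finset.mem_univ _, lt_of_lt_of_le h (hxπ.2 q p hq)⟩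
            have hcard := Finset.card_le_card hsub
            rw [Fin.card_Iic] at hcard
            omega
          · intro h
            by_contra hcon
            push_neg at hcon
            have hsub : S ⊆ Finset.Iio p := by
              intro q hq
              rw [hS, Finset.mem_filter] at hq
              rw [Finset.mem_Iio]
              by_contra hq2
              push_neg at hq2
              exact absurd (lt_of_lt_of_le hq.2 (hxπ.2 p q hq2)) (not_lt.2 hcon)
            have hcard := Finset.card_le_card hsub
            rw [Fin.card_Iio] at hcard
            omega
        refine ⟨⟨m, by omega⟩, ?_⟩
        funext i
        simp only [chainVertex]
        have e1 : (((π.symm i) : Fin n) : ℕ) < m ↔ c < x i := by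
          rw [← claimA (π.symm i), Equiv.apply_symm_apply]
        have e2 := claimB i
        by_cases hci : c < x i
        · rw [if_pos (e1.2 hci), if_pos (e2.2 hci)]
        · rw [if_neg (fun hh => hci (e1.1 hh)), if_neg (fun hh => hci (e2.1 hh))]
    set t : Finset (Fin (n + 1)) := Finset.univ.filter (fun k => w k ≠ 0) with ht
    have hsum' : ∑ k ∈ t, w k = 1 := by
      rw [ht, Finset.sum_filter_ne_zero]; exact hsum
    have hcm : t.centerMass w (chainVertex n σ) ∈
        convexHull ℝ (Set.range (chainVertex n σ) ∩ Set.range (chainVertex n π)) :=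
      Finset.centerMass_mem_convexHull t (fun k _ => hwnn k) (by rw [hsum']; norm_num)
        (fun k hk => hmem k (by rw [ht] at hk; exact (Finset.mem_filter.mp hk).2))
    rw [Finset.centerMass_eq_of_sum_1 _ _ hsum'] at hcm
    have hfilt : ∑ k ∈ t, w k • chainVertex n σ k = ∑ k : Fin (n + 1), w k • chainVertex n σ k := by
      rw [ht]
      exact Finset.sum_filter_of_ne (fun k _ hne => fun h0 => hne (by rw [h0, zero_smul]))
    rwa [hfilt, hrepr] at hcm
  · apply convexHull_min
    · rintro v ⟨⟨k₁, rfl⟩, ⟨k₂, hk₂⟩⟩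
      exact ⟨chainVertex_mem n σ k₁, hk₂ ▸ chainVertex_mem n π k₂⟩
    · exact (orderSimplex_convex n σ).inter (orderSimplex_convex n π)
end
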